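/- Let θ₀ ∈ (0,1), let X be a random variable with the Bernoulli(θ₀) distribution, and let θ' be a real number. Then E[(X − θ')²] − E[(X − 0)²] = (θ' − θ₀)² − θ₀². Consequently, if (θ' − θ₀)² < θ₀², then E[(X − θ')²] < E[(X − 0)²], i.e. the centroid θ' has strictly smaller expected L₂ loss than the centroid 0. -/

import Mathlib

/-!
Expanding the square, `E[(X − c)²] − E[X²] = c² − 2c·E[X] = (c − E[X])² − E[X]²` for every
square-integrable `X`; a `{0,1}`-valued `X` has `E[X] = P{X = 1} = θ₀`.
-/

open MeasureTheory

theorem integral_sub_const_sq_sub_integral_sq {Ω : Type*} [MeasurableSpace Ω]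
    (P : Measure Ω) [IsProbabilityMeasure P] {X : Ω → ℝ} (hX : MemLp X 2 P) (c : ℝ) :
    (∫ ω, (X ω - c) ^ 2 ∂P) - ∫ ω, X ω ^ 2 ∂P = (c - ∫ ω, X ω ∂P) ^ 2 - (∫ ω, X ω ∂P) ^ 2 := by
  have hX1 : Integrable X P := hX.integrable one_le_two
  have hX2 : Integrable (fun ω => X ω ^ 2) P := hX.integrable_sq
  have hexpand : (fun ω => (X ω - c) ^ 2) = fun ω => X ω ^ 2 - 2 * c * X ω + c ^ 2 := by
    funext ω; ring
  have hX2c : Integrable (fun ω => X ω ^ 2 - 2 * c * X ω) P := hX2.sub (hX1.const_mul _)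
  rw [hexpand, integral_add hX2c (integrable_const _),
    integral_sub hX2 (hX1.const_mul _), integral_const_mul, integral_const, probReal_univ,
    one_smul]
  ring

theorem indicator_eq_of_forall_eq_zero_or_one {Ω : Type*} {X : Ω → ℝ}
    (hval : ∀ ω, X ω = 0 ∨ X ω = 1) :
    {ω | X ω = 1}.indicator 1 = X := by
  funext ω
  rcases hval ω with h | h <;> simp [Set.indicator, h]

theorem integral_eq_measureReal_of_forall_eq_zero_or_one {Ω : Type*} [MeasurableSpace Ω]
    (μ : Measure Ω) {X : Ω → ℝ} (hX : Measurable X) (hval : ∀ ω, X ω = 0 ∨ X ω = 1) :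
    ∫ ω, X ω ∂μ = μ.real {ω | X ω = 1} := by
  conv_lhs => rw [← indicator_eq_of_forall_eq_zero_or_one hval]
  exact integral_indicator_one (hX (measurableSet_singleton 1))

theorem memLp_of_forall_eq_zero_or_one {Ω : Type*} [MeasurableSpace Ω]
    (μ : Measure Ω) [IsFiniteMeasure μ] {X : Ω → ℝ} (hX : Measurable X)
    (hval : ∀ ω, X ω = 0 ∨ X ω = 1) (p : ENNReal) : MemLp X p μ :=
  MemLp.of_bound hX.aestronglyMeasurable 1 <| Filter.Eventually.of_forall fun ω => by
    rcases hval ω with h | h <;> simp [h]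

/-- For `θ₀ ∈ (0,1)`, `X ~ Bernoulli(θ₀)` and any real `θ'`,
`E[(X − θ')²] − E[(X − 0)²] = (θ' − θ₀)² − θ₀²`; hence if `(θ' − θ₀)² < θ₀²`
then the centroid `θ'` has strictly smaller expected `L₂` loss than the centroid `0`. -/
theorem bernoulli_l2_loss_vs_zero_centroid
    {Ω : Type*} [MeasurableSpace Ω] (P : Measure Ω) [IsProbabilityMeasure P]
    (θ₀ : ℝ) (hθ₀ : θ₀ ∈ Set.Ioo (0 : ℝ) 1)
    (X : Ω → ℝ) (hX : Measurable X) (hval : ∀ ω, X ω = 0 ∨ X ω = 1)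
    (hdist : P {ω | X ω = 1} = ENNReal.ofReal θ₀)
    (θ' : ℝ) :
    (∫ ω, (X ω - θ') ^ 2 ∂P) - (∫ ω, (X ω - 0) ^ 2 ∂P) = (θ' - θ₀) ^ 2 - θ₀ ^ 2
    ∧ ((θ' - θ₀) ^ 2 < θ₀ ^ 2 → (∫ ω, (X ω - θ') ^ 2 ∂P) < ∫ ω, (X ω - 0) ^ 2 ∂P) := by
  have hmean : ∫ ω, X ω ∂P = θ₀ := by
    rw [integral_eq_measureReal_of_forall_eq_zero_or_one P hX hval, measureReal_def, hdist,
      ENNReal.toReal_ofReal hθ₀.1.le]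
  have hdiff := integral_sub_const_sq_sub_integral_sq P
    (memLp_of_forall_eq_zero_or_one P hX hval 2) θ'
  simp only [sub_zero, hmean] at hdiff ⊢
  exact ⟨hdiff, fun h => by linarith⟩
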